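/- Let x and h be vectors in ℝⁿ, let α > 0, let S = supp(x) = {i : xᵢ ≠ 0} and Z = Sᶜ. Then ‖x + h‖₁ + (1/(2α))‖x + h‖₂² ≥ [‖x‖₁ + (1/(2α))‖x‖₂²] + [‖h_Z‖₁ − (1 + ‖x_S‖_∞/α)‖h_S‖₁] + (1/(2α))‖h‖₂². -/

import Mathlib

open Finset

/-- The `j`-th largest singular value (1-indexed) of a real matrix `A`, defined as the
`j`-th largest square root of an eigenvalue of `Aᵀ * A`; zero if `j` is out of range. -/
noncomputable def sval {m n : Type*} [Fintype m] [Fintype n] [DecidableEq n]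
    (A : Matrix m n ℝ) (j : ℕ) : ℝ :=
  let ev : Fin (Fintype.card n) → ℝ := fun i =>
    Real.sqrt ((show (A.transpose * A).IsHermitian by
      simpa [Matrix.conjTranspose_eq_transpose_of_trivial] using
        Matrix.isHermitian_conjTranspose_mul_self A).eigenvalues
      ((Fintype.equivFin n).symm i))
  if h : 1 ≤ j ∧ j ≤ Fintype.card n then
    ev (Tuple.sort ev ⟨Fintype.card n - j, by omega⟩)
  else 0

/-- The trace (nuclear) norm of a real matrix: the sum of its singular values. -/
noncomputable def nuclearNorm {m n : Type*} [Fintype m] [Fintype n] [DecidableEq n]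
    (A : Matrix m n ℝ) : ℝ :=
  ∑ j ∈ Finset.Icc 1 (min (Fintype.card m) (Fintype.card n)), sval A j

/-- The Frobenius norm of a real matrix. -/
noncomputable def matFrobNorm {m n : Type*} [Fintype m] [Fintype n]
    (A : Matrix m n ℝ) : ℝ :=
  Real.sqrt (∑ i, ∑ j, (A i j) ^ 2)

/-- The mode-`n` unfolding of an `N`-way tensor. -/
def tunfold {N : ℕ} {I : Fin N → ℕ} (X : (∀ n, Fin (I n)) → ℝ) (n : Fin N) :
    Matrix (Fin (I n)) (∀ k : {k : Fin N // k ≠ n}, Fin (I k.1)) ℝ :=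
  Matrix.of fun i c =>
    X (fun k => if h : k = n then cast (congrArg (fun t => Fin (I t)) h.symm) i else c ⟨k, h⟩)

/-- The tensor trace norm: the average of the nuclear norms of the mode-`n` unfoldings. -/
noncomputable def tensorNuclearNorm {N : ℕ} {I : Fin N → ℕ} (X : (∀ n, Fin (I n)) → ℝ) : ℝ :=
  (1 / (N : ℝ)) * ∑ n : Fin N, nuclearNorm (tunfold X n)

/-- The Frobenius norm of a tensor. -/
noncomputable def tensorFrobNorm {N : ℕ} {I : Fin N → ℕ} (X : (∀ n, Fin (I n)) → ℝ) : ℝ :=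
  Real.sqrt (∑ t, X t ^ 2)

/-- The restriction of a vector to an index set (other coordinates set to zero). -/
def vrestrict {n : ℕ} (v : Fin n → ℝ) (T : Finset (Fin n)) : Fin n → ℝ :=
  fun i => if i ∈ T then v i else 0

/-- The sup (infinity) norm of a vector. -/
noncomputable def vecInfNorm {n : ℕ} (v : Fin n → ℝ) : ℝ :=
  ⨆ i, |v i|

/- On the support `S` of `x`, expanding `(xᵢ + hᵢ)² = xᵢ² + 2xᵢhᵢ + hᵢ²` and bounding
`|xᵢ + hᵢ| ≥ |xᵢ| - |hᵢ|` and `xᵢhᵢ ≥ -‖x_S‖_∞ |hᵢ|` gives the loss `(1 + ‖x_S‖_∞/α)|hᵢ|`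
coordinatewise; off `S` we have `xᵢ = 0`, so the coordinate contributes exactly `|hᵢ| + hᵢ²/(2α)`. -/

lemma vrestrict_support_eq {n : ℕ} (x : Fin n → ℝ) :
    vrestrict x {i : Fin n | x i ≠ 0}.toFinset = x := by
  ext i
  by_cases hi : x i = 0 <;> simp [vrestrict, hi]

lemma abs_le_vecInfNorm {n : ℕ} (v : Fin n → ℝ) (i : Fin n) : |v i| ≤ vecInfNorm v :=
  le_ciSup (Set.finite_range fun j => |v j|).bddAbove i

lemma abs_sq_augmented_add_ge_of_abs_le {a b M α : ℝ} (ha : |a| ≤ M) (hα : 0 ≤ α) :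
    |a| + (1 / (2 * α)) * a ^ 2 - (1 + M / α) * |b| + (1 / (2 * α)) * b ^ 2 ≤
      |a + b| + (1 / (2 * α)) * (a + b) ^ 2 := by
  have h_abs : |a| - |b| ≤ |a + b| := by simpa using abs_sub_abs_le_abs_sub a (-b)
  have h_cross : -(M * |b|) ≤ a * b := by
    have : |a * b| ≤ M * |b| := by
      rw [abs_mul]
      exact mul_le_mul_of_nonneg_right ha (abs_nonneg b)
    linarith [neg_abs_le (a * b)]
  have h_expand : (1 / (2 * α)) * (a + b) ^ 2 =
      (1 / (2 * α)) * a ^ 2 + α⁻¹ * (a * b) + (1 / (2 * α)) * b ^ 2 := by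
    rw [one_div, mul_inv]
    ring
  have h_loss : (1 + M / α) * |b| = |b| - α⁻¹ * -(M * |b|) := by ring
  rw [h_expand, h_loss]
  linarith [mul_le_mul_of_nonneg_left h_cross (inv_nonneg.mpr hα)]

/-- Augmented `ℓ₁` perturbation inequality: with `S = supp x`, `Z = Sᶜ` and `α > 0`,
`‖x+h‖₁ + ‖x+h‖₂²/(2α) ≥ [‖x‖₁ + ‖x‖₂²/(2α)] + [‖h_Z‖₁ - (1 + ‖x_S‖_∞/α)‖h_S‖₁] + ‖h‖₂²/(2α)`. -/
theorem l1_l2_augmented_add_ge_support_split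
    {n : ℕ} (x h : Fin n → ℝ) (α : ℝ) (hα : 0 < α) :
    ((∑ i, |x i|) + (1 / (2 * α)) * ∑ i, x i ^ 2)
        + ((∑ i ∈ {i : Fin n | x i ≠ 0}ᶜ.toFinset, |h i|)
            - (1 + vecInfNorm (vrestrict x {i : Fin n | x i ≠ 0}.toFinset) / α) *
                ∑ i ∈ {i : Fin n | x i ≠ 0}.toFinset, |h i|)
        + (1 / (2 * α)) * ∑ i, h i ^ 2 ≤
      (∑ i, |x i + h i|) + (1 / (2 * α)) * ∑ i, (x i + h i) ^ 2 := by
  rw [vrestrict_support_eq]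
  set K := 1 + vecInfNorm x / α
  have h_split : (∑ i ∈ {i : Fin n | x i ≠ 0}ᶜ.toFinset, |h i|)
      - K * ∑ i ∈ {i : Fin n | x i ≠ 0}.toFinset, |h i| =
        ∑ i, if x i ≠ 0 then -(K * |h i|) else |h i| := by
    rw [Finset.sum_ite, Finset.mul_sum, Finset.sum_neg_distrib, Set.toFinset_compl,
      Set.toFinset_ofPred, Finset.compl_filter]
    ring
  rw [h_split]
  simp only [Finset.mul_sum, ← Finset.sum_add_distrib]
  refine Finset.sum_le_sum fun i _ => ?_
  split_ifs with hx
  · simpa [sub_eq_add_neg] using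
      abs_sq_augmented_add_ge_of_abs_le (b := h i) (abs_le_vecInfNorm x i) hα.le
  · simp [not_not.mp hx]
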